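/- Let R be a *-reducing ring with involution and let p, q ∈ R be projections such that q - p is Moore–Penrose invertible (so that, equivalently, p+(1-p)q, q+p(1-q), (1-p)q(1-p), p+q(1-p), q+(1-q)p, (1-p)q and q(1-p) are all MP invertible). Then, writing p̄ = 1-p, the following eight elements are equal: (p+p̄q)^†·p̄qp̄, (q+p(1-q))^†·p̄qp̄, p̄q·(p̄qp̄)^†, p̄qp̄·(p+qp̄)^†, p̄qp̄·(q+(1-q)p)^†, p̄·(p̄q)^†, (qp̄)^†·p̄, and p̄·(q-p)^†·p̄. -/
import Mathlib


/-- `b` is a Moore–Penrose inverse of `a`. -/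
def IsMPInv {R : Type*} [Ring R] [StarRing R] (a b : R) : Prop :=
  a * b * a = a ∧ b * a * b = b ∧ star (a * b) = a * b ∧ star (b * a) = b * a

/-- `a` is Moore–Penrose invertible. -/
def IsMPInvertible {R : Type*} [Ring R] [StarRing R] (a : R) : Prop :=
  ∃ b, IsMPInv a b

/-- A projection: a self-adjoint idempotent. -/
def IsProjection {R : Type*} [Ring R] [StarRing R] (p : R) : Prop :=
  p * p = p ∧ star p = p

/-- A `*`-reducing ring: `a* a = 0` implies `a = 0`. -/
def IsStarReducing (R : Type*) [Ring R] [StarRing R] : Prop :=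
  ∀ a : R, star a * a = 0 → a = 0

section Aux
variable {R : Type*} [Ring R] [StarRing R]

theorem mp_unique {a b c : R} (hb : IsMPInv a b) (hc : IsMPInv a c) : b = c := by
  obtain ⟨hb1, hb2, hb3, hb4⟩ := hb
  obtain ⟨hc1, hc2, hc3, hc4⟩ := hc
  have hab : a * b = a * c := by
    calc a * b = (a * c * a) * b := by rw [hc1]
    _ = (a * c) * (a * b) := by noncomm_ring
    _ = star (a * c) * star (a * b) := by rw [hc3, hb3]
    _ = star ((a * b) * (a * c)) := (star_mul _ _).symm
    _ = star (((a * b) * a) * c) := by rw [mul_assoc (a*b) a c]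
    _ = star (a * c) := by rw [hb1]
    _ = a * c := hc3
  have hba : b * a = c * a := by
    calc b * a = b * (a * c * a) := by rw [hc1]
    _ = (b * a) * (c * a) := by noncomm_ring
    _ = star (b * a) * star (c * a) := by rw [hb4, hc4]
    _ = star ((c * a) * (b * a)) := (star_mul _ _).symm
    _ = star (c * ((a * b) * a)) := by noncomm_ring
    _ = star (c * a) := by rw [hb1]
    _ = c * a := hc4
  calc b = b * a * b := hb2.symm
  _ = (c * a) * b := by rw [hba]
  _ = c * (a * b) := by rw [mul_assoc]
  _ = c * (a * c) := by rw [hab]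
  _ = c * a * c := by rw [mul_assoc]
  _ = c := hc2

theorem mp_star {a b : R} (h : IsMPInv a b) : IsMPInv (star a) (star b) := by
  obtain ⟨h1, h2, h3, h4⟩ := h
  refine ⟨?_, ?_, ?_, ?_⟩
  · calc star a * star b * star a = star (a * b * a) := by
          rw [star_mul (a*b) a, star_mul a b]; noncomm_ring
    _ = star a := by rw [h1]
  · calc star b * star a * star b = star (b * a * b) := by
          rw [star_mul (b*a) b, star_mul b a]; noncomm_ring
    _ = star b := by rw [h2]
  · rw [← star_mul, star_star]; exact h4.symm
  · rw [← star_mul, star_star]; exact h3.symm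

theorem mp_self_star {a b : R} (ha : star a = a) (h : IsMPInv a b) : star b = b := by
  have h' := mp_star h
  rw [ha] at h'
  exact (mp_unique h' h)

theorem mp_self_comm {a b : R} (ha : star a = a) (h : IsMPInv a b) : a * b = b * a := by
  have hb := mp_self_star ha h
  calc a * b = star (a * b) := h.2.2.1.symm
  _ = star b * star a := by rw [star_mul]
  _ = b * a := by rw [hb, ha]

end Aux

theorem stmt_13 {R : Type*} [Ring R] [StarRing R] (hR : IsStarReducing R)
    (p q x₁ x₂ x₃ x₄ x₅ x₆ x₇ x₈ : R)
    (hp : IsProjection p) (hq : IsProjection q)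
    (h₁ : IsMPInv (p + (1 - p) * q) x₁)
    (h₂ : IsMPInv (q + p * (1 - q)) x₂)
    (h₃ : IsMPInv ((1 - p) * q * (1 - p)) x₃)
    (h₄ : IsMPInv (p + q * (1 - p)) x₄)
    (h₅ : IsMPInv (q + (1 - q) * p) x₅)
    (h₆ : IsMPInv ((1 - p) * q) x₆)
    (h₇ : IsMPInv (q * (1 - p)) x₇)
    (h₈ : IsMPInv (q - p) x₈) :
    x₁ * ((1 - p) * q * (1 - p)) = x₂ * ((1 - p) * q * (1 - p)) ∧
    x₂ * ((1 - p) * q * (1 - p)) = (1 - p) * q * x₃ ∧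
    (1 - p) * q * x₃ = (1 - p) * q * (1 - p) * x₄ ∧
    (1 - p) * q * (1 - p) * x₄ = (1 - p) * q * (1 - p) * x₅ ∧
    (1 - p) * q * (1 - p) * x₅ = (1 - p) * x₆ ∧
    (1 - p) * x₆ = x₇ * (1 - p) ∧
    x₇ * (1 - p) = (1 - p) * x₈ * (1 - p) := by
  obtain ⟨hp2, hpS⟩ := hp
  obtain ⟨hq2, hqS⟩ := hq
  set pb := 1 - p with hpb
  set u := pb * q with hu
  set uS := q * pb with huS
  set a := u * pb with ha
  set d := q - p with hd
  set s := u * p with hs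
  set w := a * x₃ with hw
  -- basic projection facts
  have hpbS : star pb = pb := by rw [hpb, star_sub, star_one, hpS]
  have hpb2 : pb * pb = pb := by
    rw [hpb, mul_sub, mul_one, sub_mul, one_mul, hp2, sub_self, sub_zero]
  have hppb : p * pb = 0 := by rw [hpb, mul_sub, mul_one, hp2, sub_self]
  have hpbp : pb * p = 0 := by rw [hpb, sub_mul, one_mul, hp2, sub_self]
  have hpu : p * u = 0 := by rw [hu, ← mul_assoc, hppb, zero_mul]
  have hpbu : pb * u = u := by rw [hu, ← mul_assoc, hpb2]
  have hqus : q * uS = uS := by rw [huS, ← mul_assoc, hq2]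
  have hap : a * p = 0 := by rw [ha, mul_assoc, hpbp, mul_zero]
  have hpa : p * a = 0 := by rw [ha, ← mul_assoc, hpu, zero_mul]
  have hapb : a * pb = a := by rw [ha, mul_assoc, hpb2]
  have hpba : pb * a = a := by rw [ha, ← mul_assoc, hpbu]
  have huuS : u * uS = a := by
    rw [ha, hu, huS, mul_assoc pb q, ← mul_assoc q q, hq2, mul_assoc]
  have hpbuS : pb * uS = a := by rw [huS, ha, hu, ← mul_assoc]
  have haS : star a = a := by rw [ha, hu, star_mul, star_mul, hqS, hpbS, mul_assoc]
  -- x₃ facts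
  have hx3S : star x₃ = x₃ := mp_self_star haS h₃
  have hc3 : a * x₃ = x₃ * a := mp_self_comm haS h₃
  have hx3sq : x₃ = (x₃ * x₃) * a := by
    calc x₃ = x₃ * a * x₃ := h₃.2.1.symm
    _ = x₃ * (a * x₃) := by rw [mul_assoc]
    _ = x₃ * (x₃ * a) := by rw [hc3]
    _ = (x₃ * x₃) * a := by rw [mul_assoc]
  have hx3sq' : x₃ = a * (x₃ * x₃) := by
    calc x₃ = x₃ * a * x₃ := h₃.2.1.symm
    _ = (a * x₃) * x₃ := by rw [← hc3]
    _ = a * (x₃ * x₃) := by rw [mul_assoc]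
  have hx3p : x₃ * p = 0 := by rw [hx3sq, mul_assoc, hap, mul_zero]
  have hpx3 : p * x₃ = 0 := by rw [hx3sq', ← mul_assoc, hpa, zero_mul]
  have hx3pb : x₃ * pb = x₃ := by rw [hx3sq, mul_assoc, hapb]
  have hpbx3 : pb * x₃ = x₃ := by rw [hx3sq', ← mul_assoc, hpba]
  have hx3a : x₃ * a = w := by rw [hw, hc3]
  -- w facts
  have hwa : w * a = a := by rw [hw]; exact h₃.1
  have haw : a * w = a := by rw [hw, hc3, ← mul_assoc]; exact h₃.1
  have hwS : star w = w := by rw [hw, star_mul, hx3S, haS, hc3]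
  have hwp : w * p = 0 := by rw [hw, mul_assoc, hx3p, mul_zero]
  have hpw : p * w = 0 := by rw [hw, ← mul_assoc, hpa, zero_mul]
  have hwpb : w * pb = w := by rw [hw, mul_assoc, hx3pb]
  have hpbw : pb * w = w := by rw [hw, ← mul_assoc, hpba]
  have hwx3 : w * x₃ = x₃ := by rw [hw, hc3]; exact h₃.2.1
  have hx3w : x₃ * w = x₃ := by rw [hw, ← mul_assoc]; exact h₃.2.1
  -- star of u
  have huSt : star u = uS := by rw [hu, huS, star_mul, hqS, hpbS]
  have huStS : star uS = u := by rw [hu, huS, star_mul, hqS, hpbS]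
  -- the range lemma L1 : w * u = u, via star-reducing
  have hkey : (w * u - u) * star (w * u - u) = 0 := by
    have e0 : star (w * u - u) = uS * w - uS := by rw [star_sub, star_mul, hwS, huSt]
    rw [e0]
    have e1 : (w * u) * (uS * w) = a := by
      calc (w * u) * (uS * w) = w * ((u * uS) * w) := by noncomm_ring
      _ = w * (a * w) := by rw [huuS]
      _ = w * a := by rw [haw]
      _ = a := hwa
    have e2 : (w * u) * uS = a := by rw [mul_assoc, huuS, hwa]
    have e3 : u * (uS * w) = a := by rw [← mul_assoc, huuS, haw]
    have expand : (w * u - u) * (uS * w - uS)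
        = (w * u) * (uS * w) - (w * u) * uS - u * (uS * w) + u * uS := by noncomm_ring
    rw [expand, e1, e2, e3, huuS]
    noncomm_ring
  have hL1 : w * u = u := by
    have h0 := hR (star (w * u - u)) (by rw [star_star]; exact hkey)
    have h00 : w * u - u = 0 := by
      have := congrArg star h0
      rwa [star_star, star_zero] at this
    exact sub_eq_zero.mp h00
  have hL1' : uS * w = uS := by
    have := congrArg star hL1
    rwa [star_mul, hwS, huSt] at this
  -- s facts
  have hsp : s * p = s := by rw [hs, mul_assoc, hp2]
  have hps : p * s = 0 := by rw [hs, ← mul_assoc, hpu, zero_mul]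
  have hss : s * s = 0 := by
    rw [hs, mul_assoc u p (u*p), ← mul_assoc p u p, hpu, zero_mul, mul_zero]
  have hsx3 : s * x₃ = 0 := by rw [hs, mul_assoc, hpx3, mul_zero]
  have hsa : s * a = 0 := by rw [hs, mul_assoc, hpa, mul_zero]
  have hsw : s * w = 0 := by rw [hs, mul_assoc, hpw, mul_zero]
  have hws : w * s = s := by rw [hs, ← mul_assoc, hL1]
  have hstarS : star s = p * uS := by rw [hs, star_mul, hpS, huSt]
  have hppb1 : p + pb = 1 := by rw [hpb]; abel
  have husplit : u = s + a := by rw [hs, ha, ← mul_add, hppb1, mul_one]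
  -- the explicit MP inverse of p + u
  set b1 := p - x₃ * s + x₃ with hb1
  have c1 : (p + u) * b1 = p + w := by
    rw [husplit, hb1]
    have expand : (p + (s + a)) * (p - x₃ * s + x₃)
        = p*p - (p*x₃)*s + p*x₃ + (s*p - (s*x₃)*s + s*x₃) + (a*p - (a*x₃)*s + a*x₃) := by
      noncomm_ring
    rw [expand, hp2, hpx3, hsp, hsx3, hap, ← hw, hws]
    noncomm_ring
  have c2 : b1 * (p + u) = p + w := by
    rw [husplit, hb1]
    have esp : (x₃*s)*p = x₃*s := by rw [mul_assoc, hsp]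
    have essp : (x₃*s)*s = 0 := by rw [mul_assoc, hss, mul_zero]
    have esa : (x₃*s)*a = 0 := by rw [mul_assoc, hsa, mul_zero]
    have expand : (p - x₃ * s + x₃) * (p + (s + a))
        = (p*p - (x₃*s)*p + x₃*p) + (p*s - (x₃*s)*s + x₃*s) + (p*a - (x₃*s)*a + x₃*a) := by
      noncomm_ring
    rw [expand, hp2, esp, hx3p, hps, essp, hpa, esa, hx3a]
    noncomm_ring
  have c3 : (p + u) * b1 * (p + u) = p + u := by
    rw [c1, husplit]
    have expand : (p + w) * (p + (s + a))
        = p*p + (p*s + p*a) + (w*p + (w*s + w*a)) := by noncomm_ring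
    rw [expand, hp2, hps, hpa, hwp, hws, hwa]
    abel
  have c4 : b1 * (p + u) * b1 = b1 := by
    rw [c2, hb1]
    have expand : (p + w) * (p - x₃ * s + x₃)
        = (p*p - (p*x₃)*s + p*x₃) + (w*p - (w*x₃)*s + w*x₃) := by noncomm_ring
    rw [expand, hp2, hpx3, hwp, hwx3]
    noncomm_ring
  have c5 : star ((p + u) * b1) = (p + u) * b1 := by rw [c1, star_add, hpS, hwS]
  have c6 : star (b1 * (p + u)) = b1 * (p + u) := by rw [c2, star_add, hpS, hwS]
  have hMP1 : IsMPInv (p + u) b1 := ⟨c3, c4, c5, c6⟩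
  have hx1 : x₁ = b1 := mp_unique h₁ hMP1
  have hx2 : x₂ = b1 := by
    have hqq : q + p * (1 - q) = p + u := by rw [hu, hpb]; noncomm_ring
    rw [hqq] at h₂
    exact mp_unique h₂ hMP1
  have hstarm : star (p + u) = p + uS := by rw [star_add, hpS, huSt]
  have hMP4 : IsMPInv (p + uS) (star b1) := by
    have := mp_star hMP1
    rwa [hstarm] at this
  have hx4 : x₄ = star b1 := mp_unique h₄ hMP4
  have hx5 : x₅ = star b1 := by
    have hqq : q + (1 - q) * p = p + uS := by rw [huS, hpb]; noncomm_ring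
    rw [hqq] at h₅
    exact mp_unique h₅ hMP4
  -- x₆, x₇
  have hb6 : IsMPInv u (uS * x₃) := by
    have m1 : u * (uS * x₃) = w := by rw [← mul_assoc, huuS, ← hw]
    refine ⟨?_, ?_, ?_, ?_⟩
    · rw [m1, hL1]
    · calc ((uS * x₃) * u) * (uS * x₃) = uS * ((x₃ * (u * uS)) * x₃) := by noncomm_ring
      _ = uS * ((x₃ * a) * x₃) := by rw [huuS]
      _ = uS * x₃ := by rw [h₃.2.1]
    · rw [m1, hwS]
    · have e4 : star ((uS * x₃) * u) = uS * (x₃ * u) := by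
        rw [star_mul (uS * x₃) u, star_mul uS x₃, huSt, hx3S, huStS]
      rw [e4, ← mul_assoc]
  have hx6 : x₆ = uS * x₃ := mp_unique h₆ hb6
  have hb7 : IsMPInv uS (x₃ * u) := by
    have := mp_star hb6
    rwa [huSt, star_mul, hx3S, huStS] at this
  have hx7 : x₇ = x₃ * u := mp_unique h₇ hb7
  -- x₈
  have hdS : star d = d := by rw [hd, star_sub, hqS, hpS]
  have hx8S : star x₈ = x₈ := mp_self_star hdS h₈
  have hc8 : d * x₈ = x₈ * d := mp_self_comm hdS h₈
  have hdpb : d * pb = uS := by rw [hd, sub_mul, hppb, sub_zero, huS]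
  have hduS : d * uS = a := by
    have r1 : d * uS = uS - p * uS := by rw [hd, sub_mul, hqus]
    have r2 : a = uS - p * uS := by rw [ha, hu, huS, hpb]; noncomm_ring
    rw [r1, r2]
  have hx8dd : x₈ * d * d = d := by rw [← hc8]; exact h₈.1
  have hx8sq : x₈ = (x₈ * x₈) * d := by
    calc x₈ = x₈ * d * x₈ := h₈.2.1.symm
    _ = x₈ * (d * x₈) := by rw [mul_assoc]
    _ = x₈ * (x₈ * d) := by rw [hc8]
    _ = (x₈ * x₈) * d := by rw [mul_assoc]
  have hca : (pb * x₈ * pb) * a = a := by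
    calc (pb * x₈ * pb) * a = (pb * x₈) * (pb * a) := by rw [mul_assoc]
    _ = (pb * x₈) * (d * uS) := by rw [hpba, ← hduS]
    _ = pb * ((x₈ * d) * uS) := by noncomm_ring
    _ = pb * ((x₈ * d) * (d * pb)) := by rw [← hdpb]
    _ = pb * (((x₈ * d) * d) * pb) := by rw [← mul_assoc (x₈*d) d pb]
    _ = pb * (d * pb) := by rw [hx8dd]
    _ = pb * uS := by rw [hdpb]
    _ = a := hpbuS
  have hcw : (pb * x₈ * pb) * w = w := by rw [hw, ← mul_assoc, hca]
  have e1 : x₈ * pb = (x₈ * x₈) * uS := by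
    calc x₈ * pb = ((x₈ * x₈) * d) * pb := by rw [← hx8sq]
    _ = (x₈ * x₈) * (d * pb) := by rw [mul_assoc]
    _ = (x₈ * x₈) * uS := by rw [hdpb]
  have hstep : (pb * x₈ * pb) * w = pb * x₈ * pb := by
    calc (pb * x₈ * pb) * w = pb * ((x₈ * pb) * w) := by noncomm_ring
    _ = pb * (((x₈ * x₈) * uS) * w) := by rw [e1]
    _ = pb * ((x₈ * x₈) * (uS * w)) := by rw [mul_assoc]
    _ = pb * ((x₈ * x₈) * uS) := by rw [hL1']
    _ = pb * (x₈ * pb) := by rw [← e1]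
    _ = pb * x₈ * pb := by rw [← mul_assoc]
  have hc_eq : pb * x₈ * pb = w := by
    calc pb * x₈ * pb = (pb * x₈ * pb) * w := hstep.symm
    _ = w := hcw
  -- values of the eight expressions
  have hb1a : b1 * a = w := by
    rw [hb1]
    have expand : (p - x₃ * s + x₃) * a = p * a - x₃ * (s * a) + x₃ * a := by noncomm_ring
    rw [expand, hpa, hsa, mul_zero, hx3a]
    noncomm_ring
  have hux3 : u * x₃ = w := by
    calc u * x₃ = u * (pb * x₃) := by rw [hpbx3]
    _ = (u * pb) * x₃ := by rw [← mul_assoc]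
    _ = a * x₃ := by rw [← ha]
    _ = w := hw.symm
  have hax4 : a * star b1 = w := by
    have hsb1 : star b1 = p - (p * uS) * x₃ + x₃ := by
      rw [hb1, star_add, star_sub, star_mul, hpS, hstarS, hx3S]
    rw [hsb1]
    have expand : a * (p - (p * uS) * x₃ + x₃) = a * p - ((a * p) * uS) * x₃ + a * x₃ := by
      noncomm_ring
    rw [expand, hap, ← hw]
    noncomm_ring
  have hpbx6 : pb * (uS * x₃) = w := by
    calc pb * (uS * x₃) = (pb * uS) * x₃ := by rw [← mul_assoc]
    _ = a * x₃ := by rw [hpbuS]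
    _ = w := hw.symm
  have hx7pb : (x₃ * u) * pb = w := by
    calc (x₃ * u) * pb = x₃ * (u * pb) := by rw [mul_assoc]
    _ = x₃ * a := by rw [← ha]
    _ = w := hx3a
  refine ⟨?_, ?_, ?_, ?_, ?_, ?_, ?_⟩
  · rw [hx1, hx2]
  · rw [hx2, hb1a, hux3]
  · rw [hux3, hx4, hax4]
  · rw [hx4, hx5]
  · rw [hx5, hax4, hx6, hpbx6]
  · rw [hx6, hx7, hpbx6, hx7pb]
  · rw [hx7, hx7pb, hc_eq]
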